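/- Let 1 < p < 2. There exist constants c, C > 0 and η₀ > 0 such that for all 0 < η ≤ η₀ and all complex z: if |z| ≤ η then |1+z|^p ≥ 1 + p·Re(z) + (1/2)·p·(p-1)·(Re z)² + (p/2)·(Im z)² - C·η·|z|², and if |z| > η then |1+z|^p ≥ 1 + p·Re(z) + c·η^(2-p)·|z|^p. -/

import Mathlib

/-!
Let `g z = ‖1 + z‖ ^ p - (1 + p * z.re)`. Since `‖1 + z‖ ^ p = (1 + u) ^ (p / 2)` with
`u = 2 * z.re + ‖z‖ ^ 2`, the second-order Taylor expansion of `t ↦ (1 + t) ^ (p / 2)` gives the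
quadratic lower bound up to an `O(‖z‖ ^ 3)` error, so `g z ≳ ‖z‖ ^ 2` near `0`. For large `z`,
`‖1 + z‖ ^ p ≥ (‖z‖ / 2) ^ p` beats `1 + p * ‖z‖`, so `g z ≳ ‖z‖ ^ p`; in between, `g` is continuous
and positive (strict Bernoulli), hence bounded below on the compact annulus. Thus
`g z ≥ c * min (‖z‖ ^ 2) (‖z‖ ^ p)`, and `η ^ (2 - p) * ‖z‖ ^ p ≤ min (‖z‖ ^ 2) (‖z‖ ^ p)` once
`η ≤ ‖z‖`.
-/

open Real Set Filter

lemma abs_le_mul_sq_of_hasDerivAt_two {f f' f'' : ℝ → ℝ} {u M : ℝ}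
    (hf : ∀ t ∈ uIcc 0 u, HasDerivAt f (f' t) t)
    (hf' : ∀ t ∈ uIcc 0 u, HasDerivAt f' (f'' t) t)
    (hf0 : f 0 = 0) (hf'0 : f' 0 = 0) (hM : ∀ t ∈ uIcc 0 u, |f'' t| ≤ M) :
    |f u| ≤ M * u ^ 2 := by
  have hconv : Convex ℝ (uIcc 0 u) := convex_uIcc 0 u
  have h0 : (0 : ℝ) ∈ uIcc 0 u := left_mem_uIcc
  have hM0 : 0 ≤ M := (abs_nonneg _).trans (hM 0 h0)
  have hf'_le : ∀ t ∈ uIcc 0 u, ‖f' t‖ ≤ M * |u| := fun t ht => by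
    have := hconv.norm_image_sub_le_of_norm_hasDerivWithin_le
      (fun x hx => (hf' x hx).hasDerivWithinAt) hM h0 ht
    have ht_le : |t - 0| ≤ |u - 0| := abs_sub_left_of_mem_uIcc ht
    simp only [hf'0, sub_zero, norm_eq_abs] at this ht_le ⊢
    exact this.trans (mul_le_mul_of_nonneg_left ht_le hM0)
  have := hconv.norm_image_sub_le_of_norm_hasDerivWithin_le
    (fun x hx => (hf x hx).hasDerivWithinAt) hf'_le h0 right_mem_uIcc
  simp only [hf0, sub_zero, norm_eq_abs] at this
  rwa [mul_assoc, ← sq, sq_abs] at this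

lemma abs_rpow_sub_one_le_of_le {s a b : ℝ} (hs : 0 < s) (hba : b ≤ a) (ha : a ≤ 0) :
    |s ^ a - 1| ≤ |s ^ b - 1| := by
  rcases le_total 1 s with h1 | h1
  · have hb : s ^ b ≤ s ^ a := rpow_le_rpow_of_exponent_le h1 hba
    have ha1 : s ^ a ≤ 1 := rpow_le_one_of_one_le_of_nonpos h1 ha
    rw [abs_of_nonpos (by linarith), abs_of_nonpos (by linarith)]
    linarith
  · have hb : s ^ a ≤ s ^ b := rpow_le_rpow_of_exponent_ge hs h1 hba
    have ha1 : 1 ≤ s ^ a := one_le_rpow_of_pos_of_le_one_of_nonpos hs h1 ha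
    rw [abs_of_nonneg (by linarith), abs_of_nonneg (by linarith)]
    linarith

lemma abs_one_add_rpow_sub_one_le {a t : ℝ} (ha : -2 ≤ a) (ha0 : a ≤ 0) (ht : |t| ≤ 1 / 2) :
    |(1 + t) ^ a - 1| ≤ 10 * |t| := by
  obtain ⟨ht1, ht2⟩ := abs_le.mp ht
  have hs : 0 < 1 + t := by linarith
  have hsq : 1 / 4 ≤ (1 + t) ^ 2 := by nlinarith
  calc |(1 + t) ^ a - 1| ≤ |(1 + t) ^ (-2 : ℝ) - 1| := abs_rpow_sub_one_le_of_le hs ha ha0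
    _ = |-(t * (2 + t) / (1 + t) ^ 2)| := by
        rw [rpow_neg hs.le, rpow_two]
        congr 1
        field_simp
        ring
    _ = |t| * |2 + t| / (1 + t) ^ 2 := by
        rw [abs_neg, abs_div, abs_mul, abs_of_pos (by positivity : (0:ℝ) < (1 + t) ^ 2)]
    _ ≤ |t| * (5 / 2) / (1 / 4) := by
        gcongr
        exact abs_le.mpr ⟨by linarith, by linarith⟩
    _ = 10 * |t| := by ring

lemma abs_one_add_rpow_sub_taylor_le {q u : ℝ} (hq0 : 0 ≤ q) (hq1 : q ≤ 1) (hu : |u| ≤ 1 / 2) :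
    |(1 + u) ^ q - (1 + q * u + q * (q - 1) / 2 * u ^ 2)| ≤ 3 * |u| ^ 3 := by
  have hsmall : ∀ t ∈ uIcc 0 u, |t| ≤ |u| := fun t ht => by
    simpa using abs_sub_left_of_mem_uIcc ht
  have hne : ∀ t ∈ uIcc 0 u, 1 + t ≠ 0 := fun t ht => by
    have := abs_le.mp ((hsmall t ht).trans hu)
    linarith
  have hderiv_pow : ∀ a, ∀ t ∈ uIcc 0 u,
      HasDerivAt (fun s => (1 + s) ^ a) (a * (1 + t) ^ (a - 1)) t := fun a t ht => by
    simpa using ((hasDerivAt_id t).const_add 1).rpow_const (p := a) (Or.inl (hne t ht))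
  have key := abs_le_mul_sq_of_hasDerivAt_two
    (f := fun t => (1 + t) ^ q - (1 + q * t + q * (q - 1) / 2 * t ^ 2))
    (f' := fun t => q * (1 + t) ^ (q - 1) - (q + q * (q - 1) * t))
    (f'' := fun t => q * (q - 1) * ((1 + t) ^ (q - 2) - 1)) (M := 3 * |u|)
    (fun t ht => by
      refine (hderiv_pow q t ht).sub ?_
      exact ((((hasDerivAt_id' t).const_mul q).const_add 1).add
        ((hasDerivAt_pow 2 t).const_mul (q * (q - 1) / 2))).congr_deriv (by ring))
    (fun t ht => by
      have := ((hderiv_pow (q - 1) t ht).const_mul q).sub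
        (((hasDerivAt_id' t).const_mul (q * (q - 1))).const_add q)
      rw [show q - 1 - 1 = q - 2 by ring] at this
      exact this.congr_deriv (by ring))
    (by simp) (by simp)
    (fun t ht => by
      have hq : |q * (q - 1)| ≤ 1 / 4 := by
        rw [abs_le]; constructor <;> nlinarith [sq_nonneg (q - 1 / 2)]
      have hbase := abs_one_add_rpow_sub_one_le (a := q - 2) (by linarith) (by linarith)
        ((hsmall t ht).trans hu)
      rw [abs_mul]
      nlinarith [abs_nonneg (q * (q - 1)), abs_nonneg ((1 + t) ^ (q - 2) - 1), hsmall t ht])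
  calc _ ≤ 3 * |u| * u ^ 2 := key
    _ = 3 * |u| ^ 3 := by rw [← sq_abs]; ring

lemma norm_one_add_rpow_eq (p : ℝ) (z : ℂ) :
    ‖1 + z‖ ^ p = (1 + (2 * z.re + ‖z‖ ^ 2)) ^ (p / 2) := by
  have hsq : ‖1 + z‖ ^ 2 = 1 + (2 * z.re + ‖z‖ ^ 2) := by
    simp only [Complex.sq_norm, Complex.normSq_apply, Complex.add_re, Complex.add_im,
      Complex.one_re, Complex.one_im]
    ring
  rw [← hsq, ← rpow_natCast, ← rpow_mul (norm_nonneg _)]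
  ring_nf

lemma quadratic_sub_cube_le_norm_one_add_rpow {p : ℝ} (hp0 : 0 ≤ p) (hp2 : p ≤ 2) {z : ℂ}
    (hz : ‖z‖ ≤ 1 / 8) :
    1 + p * z.re + p * (p - 1) / 2 * z.re ^ 2 + p / 2 * z.im ^ 2 - 82 * ‖z‖ ^ 3 ≤ ‖1 + z‖ ^ p := by
  set x := z.re
  set r := ‖z‖
  have hr0 : 0 ≤ r := norm_nonneg z
  have hy : z.im ^ 2 = r ^ 2 - x ^ 2 := by
    rw [Complex.sq_norm, Complex.normSq_apply]; ring
  obtain ⟨hx1, hx2⟩ := abs_le.mp (Complex.abs_re_le_norm z)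
  set u := 2 * x + r ^ 2
  have hu : |u| ≤ 3 * r := abs_le.mpr ⟨by nlinarith, by nlinarith⟩
  have htaylor := abs_le.mp (abs_one_add_rpow_sub_taylor_le (q := p / 2) (by linarith) (by linarith)
    (u := u) (by linarith))
  have hcube : |u| ^ 3 ≤ (3 * r) ^ 3 := pow_le_pow_left₀ (abs_nonneg u) hu 3
  set w := 4 * x * r ^ 2 + r ^ 4
  have hw : |p * (p - 2) / 8 * w| ≤ r ^ 3 := by
    have hp : |p * (p - 2)| ≤ 1 := abs_le.mpr ⟨by nlinarith [sq_nonneg (p - 1)], by nlinarith⟩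
    have hw : |w| ≤ 5 * r ^ 3 :=
      abs_le.mpr ⟨by nlinarith [pow_nonneg hr0 3], by nlinarith [pow_nonneg hr0 3]⟩
    rw [abs_mul, abs_div, abs_of_pos (by norm_num : (0:ℝ) < 8)]
    nlinarith [abs_nonneg (p * (p - 2)), abs_nonneg w]
  have hpoly : 1 + p / 2 * u + p / 2 * (p / 2 - 1) / 2 * u ^ 2
      = 1 + p * x + p * (p - 1) / 2 * x ^ 2 + p / 2 * z.im ^ 2 + p * (p - 2) / 8 * w := by
    rw [hy]; ring
  rw [norm_one_add_rpow_eq]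
  linarith [(abs_le.mp hw).1]

lemma one_add_mul_re_lt_norm_one_add_rpow {p : ℝ} (hp : 1 < p) {z : ℂ} (hz : z ≠ 0) :
    1 + p * z.re < ‖1 + z‖ ^ p := by
  have hre : 1 + z.re ≤ ‖1 + z‖ := by simpa using Complex.re_le_norm (1 + z)
  rcases eq_or_ne ‖1 + z‖ 1 with h1 | h1
  · have hsq : (1 + z.re) ^ 2 + z.im ^ 2 = 1 := by
      have := congrArg (· ^ 2) h1
      simp only [Complex.sq_norm, Complex.normSq_apply, Complex.add_re, Complex.add_im,
        Complex.one_re, Complex.one_im] at this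
      linarith
    have hz2 : 0 < z.re ^ 2 + z.im ^ 2 := by
      simpa [Complex.normSq_apply, sq] using Complex.normSq_pos.mpr hz
    rw [h1, one_rpow]
    nlinarith
  · have := one_add_mul_self_lt_rpow_one_add (s := ‖1 + z‖ - 1) (by linarith [norm_nonneg (1 + z)])
      (sub_ne_zero.mpr h1) hp
    rw [add_sub_cancel] at this
    nlinarith

lemma exists_one_add_mul_re_add_rpow_le {p : ℝ} (hp1 : 1 < p) (hp2 : p ≤ 2) :
    ∃ R > 0, ∀ z : ℂ, R ≤ ‖z‖ → 1 + p * z.re + ‖z‖ ^ p / 8 ≤ ‖1 + z‖ ^ p := by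
  obtain ⟨R, hR⟩ := eventually_atTop.mp
    ((tendsto_rpow_atTop (by linarith : 0 < p - 1)).eventually_ge_atTop 24)
  refine ⟨max R 2, by positivity, fun z hz => ?_⟩
  set r := ‖z‖
  have hr2 : 2 ≤ r := (le_max_right _ _).trans hz
  have hgrowth : 24 * r ≤ r ^ p := by
    have := hR r ((le_max_left _ _).trans hz)
    calc 24 * r ≤ r ^ (p - 1) * r := by nlinarith
      _ = r ^ p := by rw [← rpow_add_one (by positivity)]; ring_nf
  have hnorm : r / 2 ≤ ‖1 + z‖ := by
    have := norm_sub_norm_le z (-1)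
    rw [sub_neg_eq_add, add_comm, norm_neg, norm_one] at this
    linarith
  have h2p : (2 : ℝ) ^ p ≤ 4 :=
    (rpow_le_rpow_of_exponent_le (by norm_num) hp2).trans_eq (by norm_num)
  have hx : z.re ≤ r := Complex.re_le_norm z
  calc 1 + p * z.re + r ^ p / 8 ≤ r ^ p / 4 := by nlinarith
    _ ≤ r ^ p / 2 ^ p := by gcongr
    _ = (r / 2) ^ p := (div_rpow (by positivity) (by norm_num) p).symm
    _ ≤ ‖1 + z‖ ^ p := by gcongr

lemma exists_pos_le_of_mem_annulus {E : Type*} [NormedAddCommGroup E] [ProperSpace E]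
    {f : E → ℝ} (hf : Continuous f) (hpos : ∀ z, z ≠ 0 → 0 < f z) {a b : ℝ} (ha : 0 < a) :
    ∃ m > 0, ∀ z, a ≤ ‖z‖ → ‖z‖ ≤ b → m ≤ f z := by
  have hcompact : IsCompact (Metric.closedBall 0 b \ Metric.ball (0 : E) a) :=
    (isCompact_closedBall 0 b).diff Metric.isOpen_ball
  obtain ⟨m, hm, hmin⟩ := hcompact.exists_forall_le' hf.continuousOn (a := 0) fun z hz => by
    refine hpos z fun h => hz.2 ?_
    simpa [h] using ha
  exact ⟨m, hm, fun z hza hzb => hmin z ⟨by simpa using hzb, by simpa using hza⟩⟩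

lemma quadratic_le_norm_one_add_rpow {p : ℝ} (hp1 : 1 < p) (hp2 : p ≤ 2) {z : ℂ}
    (hz : ‖z‖ ≤ min (1 / 8) (p * (p - 1) / 328)) :
    1 + p * z.re + p * (p - 1) / 4 * ‖z‖ ^ 2 ≤ ‖1 + z‖ ^ p := by
  have hlocal := quadratic_sub_cube_le_norm_one_add_rpow (by linarith) hp2
    (hz.trans (min_le_left _ _))
  have hcube : 82 * ‖z‖ ^ 3 ≤ p * (p - 1) / 4 * ‖z‖ ^ 2 := by
    have := hz.trans (min_le_right _ _)
    nlinarith [sq_nonneg ‖z‖]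
  have hquad : p * (p - 1) / 2 * ‖z‖ ^ 2 ≤ p * (p - 1) / 2 * z.re ^ 2 + p / 2 * z.im ^ 2 := by
    rw [Complex.sq_norm, Complex.normSq_apply]
    nlinarith [mul_nonneg (mul_nonneg (by linarith : 0 ≤ p) (by linarith : 0 ≤ 2 - p))
      (sq_nonneg z.im)]
  linarith

lemma exists_mul_min_le_norm_one_add_rpow {p : ℝ} (hp1 : 1 < p) (hp2 : p ≤ 2) :
    ∃ c > 0, ∀ z : ℂ, 1 + p * z.re + c * min (‖z‖ ^ 2) (‖z‖ ^ p) ≤ ‖1 + z‖ ^ p := by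
  have hpp : 0 < p * (p - 1) := by nlinarith
  set δ := min (1 / 8) (p * (p - 1) / 328)
  have hδ : 0 < δ := by positivity
  obtain ⟨R, hR, hfar⟩ := exists_one_add_mul_re_add_rpow_le hp1 hp2
  have hcont : Continuous fun z : ℂ => ‖1 + z‖ ^ p - (1 + p * z.re) :=
    ((continuous_const.add continuous_id).norm.rpow_const fun _ => Or.inr (by linarith)).sub
      (by fun_prop)
  obtain ⟨m, hm, hmiddle⟩ := exists_pos_le_of_mem_annulus hcont
    (fun z hz => sub_pos.mpr (one_add_mul_re_lt_norm_one_add_rpow hp1 hz)) hδ (b := R)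
  refine ⟨min (min (p * (p - 1) / 4) (1 / 8)) (m / R ^ 2), by positivity, fun z => ?_⟩
  set c := min (min (p * (p - 1) / 4) (1 / 8)) (m / R ^ 2)
  have hmin0 : 0 ≤ min (‖z‖ ^ 2) (‖z‖ ^ p) := le_min (by positivity) (by positivity)
  rcases le_or_gt ‖z‖ δ with hzδ | hδz
  · have : c * min (‖z‖ ^ 2) (‖z‖ ^ p) ≤ p * (p - 1) / 4 * ‖z‖ ^ 2 :=
      mul_le_mul ((min_le_left _ _).trans (min_le_left _ _)) (min_le_left _ _) hmin0 (by positivity)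
    linarith [quadratic_le_norm_one_add_rpow hp1 hp2 hzδ]
  rcases le_or_gt ‖z‖ R with hzR | hRz
  · have : c * min (‖z‖ ^ 2) (‖z‖ ^ p) ≤ m :=
      calc c * min (‖z‖ ^ 2) (‖z‖ ^ p) ≤ m / R ^ 2 * ‖z‖ ^ 2 :=
            mul_le_mul (min_le_right _ _) (min_le_left _ _) hmin0 (by positivity)
        _ ≤ m / R ^ 2 * R ^ 2 := by gcongr
        _ = m := div_mul_cancel₀ m (by positivity)
    linarith [hmiddle z hδz.le hzR]
  · have : c * min (‖z‖ ^ 2) (‖z‖ ^ p) ≤ 1 / 8 * ‖z‖ ^ p :=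
      mul_le_mul ((min_le_left _ _).trans (min_le_right _ _)) (min_le_right _ _) hmin0 (by norm_num)
    linarith [hfar z hRz.le]

lemma rpow_two_sub_mul_rpow_le_min {η r p : ℝ} (hη : 0 < η) (hη1 : η ≤ 1) (hηr : η ≤ r)
    (hp : p ≤ 2) : η ^ (2 - p) * r ^ p ≤ min (r ^ 2) (r ^ p) := by
  have hr : 0 < r := hη.trans_le hηr
  refine le_min ?_ ?_
  · calc η ^ (2 - p) * r ^ p ≤ r ^ (2 - p) * r ^ p := by gcongr
      _ = r ^ 2 := by rw [← rpow_add hr]; norm_num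
  · exact mul_le_of_le_one_left (by positivity) (rpow_le_one hη.le hη1 (by linarith))

/-- complex quasi-Taylor lower bound for `|1+z|^p`, `1 < p < 2`. -/
theorem stmt1 (p : ℝ) (hp1 : 1 < p) (hp2 : p < 2) :
    ∃ c C η₀ : ℝ, 0 < c ∧ 0 < C ∧ 0 < η₀ ∧ ∀ η : ℝ, 0 < η → η ≤ η₀ → ∀ z : ℂ,
      (‖z‖ ≤ η →
        1 + p * z.re + (1/2) * p * (p - 1) * z.re ^ 2 + (p/2) * z.im ^ 2
            - C * η * (‖z‖) ^ 2
          ≤ (‖1 + z‖) ^ p) ∧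
      (η < ‖z‖ →
        1 + p * z.re + c * η ^ (2 - p) * (‖z‖) ^ p
          ≤ (‖1 + z‖) ^ p) := by
  obtain ⟨c, hc, hglobal⟩ := exists_mul_min_le_norm_one_add_rpow hp1 hp2.le
  refine ⟨c, 82, 1 / 8, hc, by norm_num, by norm_num,
    fun η hη hη₀ z => ⟨fun hzη => ?_, fun hzη => ?_⟩⟩
  · have hcube : ‖z‖ ^ 3 ≤ η * ‖z‖ ^ 2 := by
      rw [pow_succ']
      gcongr
    linarith [quadratic_sub_cube_le_norm_one_add_rpow (by linarith) hp2.le (hzη.trans hη₀)]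
  · have := mul_le_mul_of_nonneg_left
      (rpow_two_sub_mul_rpow_le_min hη (by linarith) hzη.le hp2.le) hc.le
    linarith [hglobal z]
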